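/- arXiv:2507.20668 — 2 statements merged into one kernel-verified Lean document; each statement's English description precedes it below -/
import Mathlib

section
/- Define τ : M₂(ℂ) → M₂(ℂ) by τ([[x₁₁, x₁₂],[x₂₁, x₂₂]]) = [[(x₁₁+x₂₂)/2, x₂₁],[x₁₂, (x₁₁+x₂₂)/2]]. Then τ is a unital positive linear map, its only eigenvalues of modulus 1 are 1 and −1, the eigenspace for 1 is span{I, [[0,1],[1,0]]}, and the eigenspace for −1 is span{[[0,−1],[1,0]]}. Moreover τ is not completely positive (not 2-positive). -/
open Matrix
open scoped ComplexOrder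

/-!
τ(x) = ½(xᵀ + PxP) with P the flip permutation, a sum of two positive maps. A completely
positive map has positive semidefinite Choi matrix (amplify it on the projection onto the
maximally entangled vector), but the Choi form of τ takes the value −1 on the antisymmetric
vector e₀⊗e₁ − e₁⊗e₀. The spectral claims are 2×2 linear algebra: τ is 1 on span{I, σₓ},
−1 on span{[[0,−1],[1,0]]} and 0 on diag(1,−1).
-/

/-- A map `τ` on `Mₙ(ℂ)` is completely positive if all its matrix amplifications
preserve positive semidefiniteness. -/
def IsCPMap {n : ℕ} (τ : Matrix (Fin n) (Fin n) ℂ → Matrix (Fin n) (Fin n) ℂ) : Prop :=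
  ∀ k : ℕ, ∀ M : Matrix (Fin k × Fin n) (Fin k × Fin n) ℂ, M.PosSemidef →
    (Matrix.of fun p q : Fin k × Fin n =>
      τ (Matrix.of fun a b : Fin n => M (p.1, a) (q.1, b)) p.2 q.2).PosSemidef

noncomputable def tau (x : Matrix (Fin 2) (Fin 2) ℂ) : Matrix (Fin 2) (Fin 2) ℂ :=
  !![(x 0 0 + x 1 1) / 2, x 1 0; x 0 1, (x 0 0 + x 1 1) / 2]

theorem tau_one : tau 1 = 1 := by
  ext i j
  fin_cases i <;> fin_cases j <;> simp [tau]

theorem tau_eq_smul_transpose_add_submatrix_swap (x : Matrix (Fin 2) (Fin 2) ℂ) :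
    tau x = (1 / 2 : ℂ) • (xᵀ + x.submatrix (Equiv.swap 0 1) (Equiv.swap 0 1)) := by
  ext i j
  fin_cases i <;> fin_cases j <;> simp [tau] <;> ring

theorem posSemidef_tau {x : Matrix (Fin 2) (Fin 2) ℂ} (hx : x.PosSemidef) :
    (tau x).PosSemidef := by
  rw [tau_eq_smul_transpose_add_submatrix_swap]
  exact (hx.transpose.add (hx.submatrix _)).smul (by norm_num [Complex.le_def])

theorem eq_one_or_eq_neg_one_or_eq_zero_of_tau_eq_smul {lam : ℂ}
    {x : Matrix (Fin 2) (Fin 2) ℂ} (hx : x ≠ 0) (h : tau x = lam • x) :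
    lam = 1 ∨ lam = -1 ∨ lam = 0 := by
  have e00 := congrFun₂ h 0 0
  have e01 := congrFun₂ h 0 1
  have e10 := congrFun₂ h 1 0
  have e11 := congrFun₂ h 1 1
  simp [tau] at e00 e01 e10 e11
  by_contra! hlam
  obtain ⟨h1, hm1, h0⟩ := hlam
  have hsq : lam ^ 2 - 1 ≠ 0 := by
    rw [show lam ^ 2 - 1 = (lam - 1) * (lam + 1) by ring]
    exact mul_ne_zero (sub_ne_zero.2 h1) (by rwa [← sub_neg_eq_add, sub_ne_zero])
  have h01 : x 0 1 = 0 :=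
    (mul_eq_zero.1 (by linear_combination -lam * e01 - e10 :
      (lam ^ 2 - 1) * x 0 1 = 0)).resolve_left hsq
  have h10 : x 1 0 = 0 := by rw [e01, h01, mul_zero]
  have hdiag : x 0 0 = x 1 1 :=
    sub_eq_zero.1 ((mul_eq_zero.1 (by linear_combination e11 - e00 :
      lam * (x 0 0 - x 1 1) = 0)).resolve_left h0)
  have h00 : x 0 0 = 0 :=
    (mul_eq_zero.1 (by linear_combination e00 + hdiag / 2 : (1 - lam) * x 0 0 = 0)).resolve_left
      (sub_ne_zero.2 h1.symm)
  apply hx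
  ext i j
  fin_cases i <;> fin_cases j <;> simp [h00, h01, h10, ← hdiag]

theorem tau_eq_self_iff {x : Matrix (Fin 2) (Fin 2) ℂ} :
    tau x = x ↔ x ∈ Submodule.span ℂ {1, !![0, 1; 1, 0]} := by
  rw [Submodule.mem_span_pair]
  constructor
  · intro h
    refine ⟨x 0 0, x 0 1, ?_⟩
    have e01 := congrFun₂ h 0 1
    have e11 := congrFun₂ h 1 1
    simp [tau] at e01 e11
    ext i j
    fin_cases i <;> fin_cases j <;> simp
    · exact e01.symm
    · linear_combination 2 * e11
  · rintro ⟨a, b, rfl⟩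
    ext i j
    fin_cases i <;> fin_cases j <;> simp [tau]

theorem tau_eq_neg_self_iff {x : Matrix (Fin 2) (Fin 2) ℂ} :
    tau x = (-1 : ℂ) • x ↔ x ∈ Submodule.span ℂ {!![0, -1; 1, 0]} := by
  rw [Submodule.mem_span_singleton]
  constructor
  · intro h
    have e00 := congrFun₂ h 0 0
    have e01 := congrFun₂ h 0 1
    have e11 := congrFun₂ h 1 1
    simp [tau] at e00 e01 e11
    have h00 : x 0 0 = 0 := by linear_combination (3 / 4 : ℂ) * e00 - (1 / 4 : ℂ) * e11
    have h11 : x 1 1 = 0 := by linear_combination (-1 / 4 : ℂ) * e00 + (3 / 4 : ℂ) * e11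
    refine ⟨x 1 0, ?_⟩
    ext i j
    fin_cases i <;> fin_cases j <;> simp [h00, h11]
    linear_combination -e01
  · rintro ⟨a, rfl⟩
    ext i j
    fin_cases i <;> fin_cases j <;> simp [tau]

/-- The Choi matrix `∑ᵢⱼ Eᵢⱼ ⊗ τ(Eᵢⱼ)`. -/
def choiMatrix {n : ℕ} (τ : Matrix (Fin n) (Fin n) ℂ → Matrix (Fin n) (Fin n) ℂ) :
    Matrix (Fin n × Fin n) (Fin n × Fin n) ℂ :=
  Matrix.of fun p q => τ (single p.1 q.1 1) p.2 q.2

theorem IsCPMap.posSemidef_choiMatrix {n : ℕ}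
    {τ : Matrix (Fin n) (Fin n) ℂ → Matrix (Fin n) (Fin n) ℂ} (hτ : IsCPMap τ) :
    (choiMatrix τ).PosSemidef := by
  let v : Fin n × Fin n → ℂ := fun p => if p.1 = p.2 then 1 else 0
  have hblock : ∀ p q : Fin n × Fin n,
      (of fun a b => vecMulVec v (star v) (p.1, a) (q.1, b)) = single p.1 q.1 1 := by
    intro p q
    ext a b
    simp [v, vecMulVec, single, ← ite_and, eq_comm, and_comm]
  simpa [choiMatrix, hblock] using hτ n _ (posSemidef_vecMulVec_self_star v)

theorem not_posSemidef_choiMatrix_tau : ¬ (choiMatrix tau).PosSemidef := by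
  intro h
  let y : Fin 2 × Fin 2 → ℂ := fun p => !![0, 1; -1, 0] p.1 p.2
  -- the form is ½ + ½ − 1 − 1
  have hy : star y ⬝ᵥ (choiMatrix tau *ᵥ y) = -1 := by
    simp [y, choiMatrix, tau, dotProduct, mulVec, Fintype.sum_prod_type, single]
    norm_num
  have := h.dotProduct_mulVec_nonneg y
  rw [hy] at this
  norm_num [Complex.le_def] at this

/-- The map `τ([[x₁₁,x₁₂],[x₂₁,x₂₂]]) = [[(x₁₁+x₂₂)/2, x₂₁],[x₁₂, (x₁₁+x₂₂)/2]]` is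
unital and positive, its only peripheral eigenvalues are `1` and `−1` with eigenspaces
`span{I, [[0,1],[1,0]]}` and `span{[[0,−1],[1,0]]}` respectively, and `τ` is not
completely positive. -/
theorem example_positive_not_cp
    (τ : Matrix (Fin 2) (Fin 2) ℂ →ₗ[ℂ] Matrix (Fin 2) (Fin 2) ℂ)
    (hτ : ∀ x : Matrix (Fin 2) (Fin 2) ℂ,
      τ x = !![(x 0 0 + x 1 1) / 2, x 1 0; x 0 1, (x 0 0 + x 1 1) / 2]) :
    τ 1 = 1 ∧
    (∀ x : Matrix (Fin 2) (Fin 2) ℂ, x.PosSemidef → (τ x).PosSemidef) ∧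
    (∀ lam : ℂ, ‖lam‖ = 1 →
      (∃ x : Matrix (Fin 2) (Fin 2) ℂ, x ≠ 0 ∧ τ x = lam • x) →
      lam = 1 ∨ lam = -1) ∧
    ({x : Matrix (Fin 2) (Fin 2) ℂ | τ x = x} =
      ↑(Submodule.span ℂ ({1, !![0, 1; 1, 0]} : Set (Matrix (Fin 2) (Fin 2) ℂ)))) ∧
    ({x : Matrix (Fin 2) (Fin 2) ℂ | τ x = (-1 : ℂ) • x} =
      ↑(Submodule.span ℂ ({!![0, -1; 1, 0]} : Set (Matrix (Fin 2) (Fin 2) ℂ)))) ∧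
    ¬ IsCPMap ⇑τ := by
  rw [show ⇑τ = tau from funext hτ]
  refine ⟨tau_one, fun x hx => posSemidef_tau hx, ?_, ?_, ?_,
    fun hcp => not_posSemidef_choiMatrix_tau hcp.posSemidef_choiMatrix⟩
  · rintro lam hlam ⟨x, hx, hlx⟩
    have h0 : lam ≠ 0 := by rintro rfl; simp at hlam
    simpa [h0] using eq_one_or_eq_neg_one_or_eq_zero_of_tau_eq_smul hx hlx
  · ext x
    exact tau_eq_self_iff
  · ext x
    exact tau_eq_neg_self_iff
end

section
/- Define τ : M₂(ℂ) → M₂(ℂ) by τ([[x₁₁, x₁₂],[x₂₁, x₂₂]]) = [[2x₁₁, −x₁₂],[−x₂₁, 2x₂₂]]. Then τ is completely positive, and if τ(x) = λx for λ ∈ ℂ with |λ| = 1 and x ≠ 0, then λ = −1 and x ∈ span{E₁₂, E₂₁}; conversely every element of span{E₁₂, E₂₁} is an eigenvector for eigenvalue −1. -/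
/-!
`τ` is the Schur multiplier `x ↦ S ⊙ x` by `S = [[2, -1], [-1, 2]] = Bᴴ B`, which is positive
semidefinite. Every amplification of a Schur multiplier is again a Schur multiplier, by a
compression of `S`, so complete positivity is the Schur product theorem. If `S ⊙ x = λ x`, then
`S i j = λ` wherever `x i j ≠ 0`; as `|λ| = 1` rules out `λ = 2`, the diagonal of `x` vanishes and
`λ = -1`.
-/

open Matrix
open scoped ComplexOrder

-- The amplification is definitionally `S.submatrix Prod.snd Prod.snd ⊙ M`.
theorem isCPMap_hadamard {n : ℕ} {S : Matrix (Fin n) (Fin n) ℂ} (hS : S.PosSemidef) :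
    IsCPMap (S ⊙ ·) :=
  fun _ _ hM => (hS.submatrix Prod.snd).hadamard hM

theorem hadamard_apply_eq_of_hadamard_eq_smul {m n R : Type*} [CommMonoidWithZero R]
    [IsCancelMulZero R] {S x : Matrix m n R} {lam : R}
    (h : S ⊙ x = lam • x) {i : m} {j : n} (hx : x i j ≠ 0) : S i j = lam :=
  mul_right_cancel₀ hx (congrFun₂ h i j)

theorem mem_span_single_zero_one_single_one_zero {R : Type*} [CommSemiring R]
    {x : Matrix (Fin 2) (Fin 2) R} :
    x ∈ Submodule.span R {single 0 1 1, single 1 0 1} ↔ x 0 0 = 0 ∧ x 1 1 = 0 := by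
  rw [Submodule.mem_span_pair]
  constructor
  · rintro ⟨a, b, rfl⟩
    simp
  · rintro ⟨h00, h11⟩
    refine ⟨x 0 1, x 1 0, ?_⟩
    ext i j
    fin_cases i <;> fin_cases j <;> simp [h00, h11]

def tauSymbol : Matrix (Fin 2) (Fin 2) ℂ := !![2, -1; -1, 2]

theorem tauSymbol_apply_self (i : Fin 2) : tauSymbol i i = 2 := by
  fin_cases i <;> rfl

theorem tauSymbol_apply_of_ne {i j : Fin 2} (h : i ≠ j) : tauSymbol i j = -1 := by
  fin_cases i <;> fin_cases j <;> first | rfl | exact absurd rfl h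

theorem posSemidef_tauSymbol : tauSymbol.PosSemidef := by
  let B : Matrix (Fin 3) (Fin 2) ℂ := !![1, -1; 1, 0; 0, 1]
  have hB : tauSymbol = Bᴴ * B := by
    ext i j
    fin_cases i <;> fin_cases j <;> simp [B, tauSymbol, mul_apply, Fin.sum_univ_three] <;> norm_num
  exact hB ▸ posSemidef_conjTranspose_mul_self B

/-- The map `τ([[x₁₁,x₁₂],[x₂₁,x₂₂]]) = [[2x₁₁, −x₁₂],[−x₂₁, 2x₂₂]]` is completely
positive; its only peripheral eigenvalue is `−1`, with eigenspace `span{E₁₂, E₂₁}`,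
and conversely every element of `span{E₁₂, E₂₁}` is an eigenvector for `−1`. -/
theorem example_noncontractive_cp
    (τ : Matrix (Fin 2) (Fin 2) ℂ →ₗ[ℂ] Matrix (Fin 2) (Fin 2) ℂ)
    (hτ : ∀ x : Matrix (Fin 2) (Fin 2) ℂ,
      τ x = !![2 * x 0 0, -x 0 1; -x 1 0, 2 * x 1 1]) :
    IsCPMap ⇑τ ∧
    (∀ (lam : ℂ) (x : Matrix (Fin 2) (Fin 2) ℂ), ‖lam‖ = 1 → x ≠ 0 →
      τ x = lam • x →
      lam = -1 ∧ x ∈ Submodule.span ℂ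
        ({Matrix.single 0 1 1, Matrix.single 1 0 1} :
          Set (Matrix (Fin 2) (Fin 2) ℂ))) ∧
    (∀ x ∈ Submodule.span ℂ
        ({Matrix.single 0 1 1, Matrix.single 1 0 1} :
          Set (Matrix (Fin 2) (Fin 2) ℂ)),
      τ x = (-1 : ℂ) • x) := by
  have hτS : ⇑τ = (tauSymbol ⊙ ·) := by
    ext x i j
    fin_cases i <;> fin_cases j <;> simp [hτ, tauSymbol]
  refine ⟨hτS ▸ isCPMap_hadamard posSemidef_tauSymbol, fun lam x hlam hx hev => ?_, ?_⟩
  · rw [hτS] at hev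
    have hlam2 : lam ≠ 2 := by rintro rfl; norm_num at hlam
    have hdiag (i : Fin 2) : x i i = 0 := by
      by_contra h
      exact hlam2 (by rw [← hadamard_apply_eq_of_hadamard_eq_smul hev h, tauSymbol_apply_self])
    obtain ⟨i, j, hij⟩ : ∃ i j, x i j ≠ 0 := by
      by_contra! h
      exact hx (Matrix.ext h)
    have hoff : i ≠ j := by rintro rfl; exact hij (hdiag i)
    refine ⟨?_, mem_span_single_zero_one_single_one_zero.2 ⟨hdiag 0, hdiag 1⟩⟩
    rw [← hadamard_apply_eq_of_hadamard_eq_smul hev hij, tauSymbol_apply_of_ne hoff]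
  · intro x hx
    obtain ⟨h00, h11⟩ := mem_span_single_zero_one_single_one_zero.1 hx
    ext i j
    fin_cases i <;> fin_cases j <;> simp [hτ, h00, h11]
end
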